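/- Let d be a positive integer, k ∈ ℚ with k ≥ 2, and t ∈ ℝ. Assume that every rational polytope Q ⊂ ℝ^d of dimension d all of whose edges have lattice length strictly greater than t is k-convex-normal. Then every rational polytope P ⊂ ℝ^d of dimension d all of whose edges have lattice length at least t is k-convex-normal. -/

import Mathlib

open Set Metric Pointwise

noncomputable section

/-- Points of the Euclidean space `ℝ^d`. -/
abbrev Pt (d : ℕ) : Type := EuclideanSpace ℝ (Fin d)

/-- `x` is a point of the standard lattice `ℤ^d ⊂ ℝ^d`. -/
def IsLatticePt {d : ℕ} (x : Pt d) : Prop := ∀ i, ∃ n : ℤ, x i = (n : ℝ)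

/-- `x` has rational coordinates. -/
def IsRatPt {d : ℕ} (x : Pt d) : Prop := ∀ i, ∃ q : ℚ, x i = (q : ℝ)

/-- `P` is a polytope with rational vertices. -/
def IsRationalPolytope {d : ℕ} (P : Set (Pt d)) : Prop :=
  ∃ V : Finset (Pt d), (∀ v ∈ V, IsRatPt v) ∧ P = convexHull ℝ (V : Set (Pt d))

/-- `P` is a polytope with integral vertices. -/
def IsLatticePolytope {d : ℕ} (P : Set (Pt d)) : Prop :=
  ∃ V : Finset (Pt d), (∀ v ∈ V, IsLatticePt v) ∧ P = convexHull ℝ (V : Set (Pt d))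

/-- The (affine) dimension of a set. -/
def polyDim {d : ℕ} (P : Set (Pt d)) : ℕ := Module.finrank ℝ (vectorSpan ℝ P)

/-- An integer vector is primitive if its components are coprime. -/
def IsPrimitive {d : ℕ} (u : Fin d → ℤ) : Prop := Finset.univ.gcd u = 1

/-- The segment `[v, w]` has lattice length at least `lb`: whenever `w - v = t • u` with
`u` a primitive integer vector and `t > 0`, one has `t ≥ lb`. -/
def LatLenGE {d : ℕ} (v w : Pt d) (lb : ℝ) : Prop :=
  ∀ (u : Fin d → ℤ) (t : ℝ), 0 < t → IsPrimitive u →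
    (∀ i, w i - v i = t * (u i : ℝ)) → lb ≤ t

/-- The segment `[v, w]` has lattice length greater than `lb`. -/
def LatLenGT {d : ℕ} (v w : Pt d) (lb : ℝ) : Prop :=
  ∀ (u : Fin d → ℤ) (t : ℝ), 0 < t → IsPrimitive u →
    (∀ i, w i - v i = t * (u i : ℝ)) → lb < t

/-- `[v, w]` is an edge (a one-dimensional face) of `P`. -/
def IsEdge {d : ℕ} (P : Set (Pt d)) (v w : Pt d) : Prop :=
  v ≠ w ∧ IsExtreme ℝ P (segment ℝ v w)

/-- Every edge of `P` has lattice length at least `lb`. -/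
def EdgeLengthsGE {d : ℕ} (P : Set (Pt d)) (lb : ℝ) : Prop :=
  ∀ v w, IsEdge P v w → LatLenGE v w lb

/-- Every edge of `P` has lattice length greater than `lb`. -/
def EdgeLengthsGT {d : ℕ} (P : Set (Pt d)) (lb : ℝ) : Prop :=
  ∀ v w, IsEdge P v w → LatLenGT v w lb

/-- The union `⋃ (x + P)` over all vertices `v` of `P` and all
`x ∈ (c-1)P ∩ ((c-1)v + ℤ^d)`. -/
def cnUnion {d : ℕ} (P : Set (Pt d)) (c : ℝ) : Set (Pt d) :=
  {y | ∃ v ∈ Set.extremePoints ℝ P, ∃ x ∈ (c - 1) • P,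
    IsLatticePt (x - (c - 1) • v) ∧ ∃ p ∈ P, y = x + p}

/-- `P` is `k`-convex-normal: `CN(d,k)`. -/
def ConvexNormal {d : ℕ} (k : ℚ) (P : Set (Pt d)) : Prop :=
  ∀ c : ℚ, 2 ≤ c → c ≤ k → (c : ℝ) • P = cnUnion P (c : ℝ)

/-- `P` is integrally closed. -/
def IntegrallyClosed {d : ℕ} (P : Set (Pt d)) : Prop :=
  ∀ c : ℕ, 0 < c → ∀ z ∈ (c : ℝ) • P, IsLatticePt z →
    ∃ x : Fin c → Pt d, (∀ i, x i ∈ P ∧ IsLatticePt (x i)) ∧ ∑ i, x i = z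

/-- A face of a polytope: a closed convex extreme subset. -/
def IsFaceOf {d : ℕ} (P F : Set (Pt d)) : Prop :=
  IsExtreme ℝ P F ∧ Convex ℝ F ∧ IsClosed F

/-- A facet: a face of codimension one. -/
def IsFacetOf {d : ℕ} (P F : Set (Pt d)) : Prop :=
  IsFaceOf P F ∧ polyDim F + 1 = polyDim P

/-- `width_F(P)`: the maximum over vertices `v` of `P` of `dist(v, aff F)`. -/
def facetWidth {d : ℕ} (P F : Set (Pt d)) : ℝ :=
  sSup ((fun v => infDist v ((affineSpan ℝ F : AffineSubspace ℝ (Pt d)) : Set (Pt d))) ''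
    Set.extremePoints ℝ P)

/-- `U_P(F, ε)`: the `ε`-layer of `P` along (the affine hull of) `F`. -/
def layer {d : ℕ} (P F : Set (Pt d)) (ε : ℝ) : Set (Pt d) :=
  {x ∈ P | infDist x ((affineSpan ℝ F : AffineSubspace ℝ (Pt d)) : Set (Pt d)) ≤ ε}

/-- `P` is `k`-boundary-convex-normal: `BCN(d,k)`. -/
def BCN {d : ℕ} (k : ℚ) (P : Set (Pt d)) : Prop :=
  ∀ F, IsFacetOf P F → ∀ c : ℚ, 2 ≤ c → c ≤ k →
    layer ((c : ℝ) • P) ((c : ℝ) • F) (facetWidth P F / ((d : ℝ) + 1)) ⊆ cnUnion P (c : ℝ)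

/-- The parallelepiped `z + {Σ λᵢ • wᵢ : 0 ≤ λᵢ ≤ 1}`. -/
def Parallelepiped {d m : ℕ} (z : Pt d) (w : Fin m → Pt d) : Set (Pt d) :=
  {x | ∃ lam : Fin m → ℝ, (∀ i, lam i ∈ Icc (0 : ℝ) 1) ∧ x = z + ∑ i, lam i • w i}

/-- `L` is a full-dimensional lattice parallelepiped. -/
def IsLatticeParallelepiped {d : ℕ} (L : Set (Pt d)) : Prop :=
  ∃ (z : Pt d) (w : Fin d → Pt d), IsLatticePt z ∧ (∀ i, IsLatticePt (w i)) ∧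
    LinearIndependent ℝ w ∧ L = Parallelepiped z w

/-!
Scaling `P` by a rational `s > 1` multiplies all lattice edge lengths by `s`, so `s • P` satisfies
the hypothesis and is `k`-convex-normal. Let `s ↓ 1`. For each `s`, membership of `s • y` in
`cnUnion (s • P) c` is witnessed by a vertex `v` of `P` and a lattice point `z` from a bounded,
hence finite, set; so one pair `(v, z)` works for `s` arbitrarily close to `1`. The set of `s⁻¹`
for which a fixed pair works is closed, so `(v, z)` witnesses `y ∈ cnUnion P c`.
-/

open Filter Topology

theorem IsExtreme.image_linearEquiv {𝕜 E F : Type*} [Ring 𝕜] [PartialOrder 𝕜] [IsOrderedRing 𝕜]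
    [AddCommGroup E] [Module 𝕜 E] [AddCommGroup F] [Module 𝕜 F] {A B : Set E}
    (h : IsExtreme 𝕜 A B) (f : E ≃ₗ[𝕜] F) : IsExtreme 𝕜 (f '' A) (f '' B) := by
  refine ⟨image_mono h.subset, ?_⟩
  rintro _ ⟨x₁, hx₁, rfl⟩ _ ⟨x₂, hx₂, rfl⟩ _ ⟨x, hx, rfl⟩ hseg
  rw [← LinearEquiv.coe_toLinearMap, ← LinearMap.coe_toAffineMap,
    ← image_openSegment] at hseg
  obtain ⟨y, hy, hyx⟩ := hseg
  rw [LinearMap.coe_toAffineMap, LinearEquiv.coe_toLinearMap, f.injective.eq_iff] at hyx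
  exact mem_image_of_mem f (h.left_mem_of_mem_openSegment hx₁ hx₂ hx (hyx ▸ hy))

variable {d : ℕ}

lemma IsEdge.inv_smul {P : Set (Pt d)} {r : ℝ} (hr : r ≠ 0) {v w : Pt d}
    (h : IsEdge (r • P) v w) : IsEdge P (r⁻¹ • v) (r⁻¹ • w) := by
  refine ⟨fun hvw => h.1 (smul_right_injective _ (inv_ne_zero hr) hvw), ?_⟩
  let e := LinearEquiv.smulOfNeZero ℝ (Pt d) r⁻¹ (inv_ne_zero hr)
  have hext := h.2.image_linearEquiv e
  have hP : e '' (r • P) = P := by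
    simp only [e, LinearEquiv.smulOfNeZero_apply, Set.image_smul, inv_smul_smul₀ hr]
  rw [← LinearEquiv.coe_toLinearMap, ← LinearMap.coe_toAffineMap, image_segment,
    LinearMap.coe_toAffineMap, LinearEquiv.coe_toLinearMap, hP] at hext
  exact hext

lemma EdgeLengthsGE.smul_of_one_lt {P : Set (Pt d)} {t r : ℝ} (h : EdgeLengthsGE P t)
    (hr : 1 < r) : EdgeLengthsGT (r • P) t := by
  have hr₀ : 0 < r := one_pos.trans hr
  intro v w hvw u τ hτ hu hwv
  have hτr : t ≤ r⁻¹ * τ := h _ _ (hvw.inv_smul hr₀.ne') u _ (by positivity) hu fun i => by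
    simp only [PiLp.smul_apply, smul_eq_mul, ← mul_sub, hwv i, mul_assoc]
  calc t ≤ r⁻¹ * τ := hτr
    _ < τ := by rwa [inv_mul_lt_iff₀ hr₀, lt_mul_iff_one_lt_left hτ]

lemma IsRationalPolytope.ratCast_smul {P : Set (Pt d)} (h : IsRationalPolytope P) (q : ℚ) :
    IsRationalPolytope ((q : ℝ) • P) := by
  classical
  obtain ⟨V, hV, rfl⟩ := h
  refine ⟨V.image ((q : ℝ) • ·), ?_, by rw [Finset.coe_image, Set.image_smul, convexHull_smul]⟩
  simp only [Finset.mem_image]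
  rintro _ ⟨v, hv, rfl⟩ i
  obtain ⟨p, hp⟩ := hV v hv i
  exact ⟨q * p, by simp [hp]⟩

lemma polyDim_smul {r : ℝ} (hr : r ≠ 0) (P : Set (Pt d)) : polyDim (r • P) = polyDim P := by
  let e := LinearEquiv.smulOfNeZero ℝ (Pt d) r hr
  have : vectorSpan ℝ (r • P) = (vectorSpan ℝ P).map (e : Pt d →ₗ[ℝ] Pt d) := by
    rw [← Set.image_smul]
    exact (AffineMap.map_vectorSpan (e : Pt d →ₗ[ℝ] Pt d).toAffineMap).symm
  rw [polyDim, this, e.finrank_map_eq, polyDim]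

lemma finite_setOf_isLatticePt_norm_le (R : ℝ) :
    {z : Pt d | IsLatticePt z ∧ ‖z‖ ≤ R}.Finite := by
  refine ((Set.finite_Icc (-fun _ => ⌈R⌉) fun _ => ⌈R⌉).image
    fun n : Fin d → ℤ => (WithLp.toLp 2 fun i => (n i : ℝ) : Pt d)).subset ?_
  rintro z ⟨hz, hR⟩
  choose n hn using hz
  have hni (i : Fin d) : -(⌈R⌉ : ℝ) ≤ n i ∧ (n i : ℝ) ≤ ⌈R⌉ :=
    abs_le.1 ((hn i ▸ PiLp.norm_apply_le z i).trans (hR.trans (Int.le_ceil R)))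
  exact ⟨n, ⟨fun i => by exact_mod_cast (hni i).1, fun i => by exact_mod_cast (hni i).2⟩,
    by ext i; exact (hn i).symm⟩

lemma cnUnion_subset_smul {P : Set (Pt d)} (hP : Convex ℝ P) {c : ℝ} (hc : 1 ≤ c) :
    cnUnion P c ⊆ c • P := by
  rintro _ ⟨v, -, x, hx, -, p, hp, rfl⟩
  have hsplit := hP.add_smul (sub_nonneg.2 hc) zero_le_one
  rw [sub_add_cancel, one_smul] at hsplit
  exact hsplit ▸ add_mem_add hx hp

lemma mem_cnUnion_iff {P : Set (Pt d)} {c : ℝ} {y : Pt d} :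
    y ∈ cnUnion P c ↔ ∃ v ∈ extremePoints ℝ P, ∃ z, IsLatticePt z ∧
      z + (c - 1) • v ∈ (c - 1) • P ∧ y - (z + (c - 1) • v) ∈ P := by
  constructor
  · rintro ⟨v, hv, x, hx, hz, p, hp, rfl⟩
    exact ⟨v, hv, _, hz, by rwa [sub_add_cancel], by rwa [sub_add_cancel, add_sub_cancel_left]⟩
  · rintro ⟨v, hv, z, hz, hx, hp⟩
    exact ⟨v, hv, _, hx, by rwa [add_sub_cancel_right], _, hp, (add_sub_cancel _ _).symm⟩

lemma extremePoints_smul {P : Set (Pt d)} {r : ℝ} (hr : r ≠ 0) :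
    extremePoints ℝ (r • P) = r • extremePoints ℝ P := by
  simpa only [LinearEquiv.smulOfNeZero_apply, Set.image_smul] using
    (image_extremePoints (LinearEquiv.smulOfNeZero ℝ (Pt d) r hr) P).symm

lemma smul_mem_cnUnion_smul_iff {P : Set (Pt d)} {c s : ℝ} (hs : s ≠ 0) {y : Pt d} :
    s • y ∈ cnUnion (s • P) c ↔ ∃ v ∈ extremePoints ℝ P, ∃ z, IsLatticePt z ∧
      s⁻¹ • z + (c - 1) • v ∈ (c - 1) • P ∧ y - (s⁻¹ • z + (c - 1) • v) ∈ P := by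
  have hscale (v z : Pt d) : z + (c - 1) • s • v = s • (s⁻¹ • z + (c - 1) • v) := by
    rw [smul_add, smul_inv_smul₀ hs, smul_comm]
  rw [mem_cnUnion_iff, extremePoints_smul hs, ← Set.image_smul, Set.exists_mem_image]
  refine exists_congr fun v => and_congr_right fun _ => exists_congr fun z =>
    and_congr_right fun _ => ?_
  rw [hscale, smul_comm (c - 1) s P, ← smul_sub, smul_mem_smul_set_iff₀ hs,
    smul_mem_smul_set_iff₀ hs]

lemma mem_cnUnion_of_tendsto {P : Set (Pt d)} (hP : IsCompact P)
    (hext : (extremePoints ℝ P).Finite) {c : ℝ} {y : Pt d} {s : ℕ → ℝ}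
    (hs : ∀ n, s n ∈ Ioc 0 2) (hlim : Tendsto s atTop (𝓝 1))
    (hy : ∀ n, s n • y ∈ cnUnion (s n • P) c) : y ∈ cnUnion P c := by
  obtain ⟨R, hR⟩ := hP.isBounded.exists_norm_le
  let M := 2 * (|c - 1| * R + |c - 1| * R)
  let T := extremePoints ℝ P ×ˢ {z : Pt d | IsLatticePt z ∧ ‖z‖ ≤ M}
  let A (vz : Pt d × Pt d) : Set ℝ :=
    {r | r • vz.2 + (c - 1) • vz.1 ∈ (c - 1) • P ∧ y - (r • vz.2 + (c - 1) • vz.1) ∈ P}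
  have hA (vz : Pt d × Pt d) : IsClosed (A vz) :=
    ((hP.smul (c - 1)).isClosed.preimage (by fun_prop)).inter
      (hP.isClosed.preimage (by fun_prop))
  have hmem (n : ℕ) : (s n)⁻¹ ∈ ⋃ vz ∈ T, A vz := by
    obtain ⟨hs₀, hs₂⟩ := hs n
    obtain ⟨v, hv, z, hz, hx, hyx⟩ := (smul_mem_cnUnion_smul_iff hs₀.ne').1 (hy n)
    obtain ⟨p, hp, hpx : (c - 1) • p = _⟩ := hx
    have hz_eq : z = s n • ((c - 1) • p - (c - 1) • v) := by
      rw [hpx, add_sub_cancel_right, smul_inv_smul₀ hs₀.ne']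
    have hbound {q : Pt d} (hq : q ∈ P) : ‖(c - 1) • q‖ ≤ |c - 1| * R := by
      rw [norm_smul, Real.norm_eq_abs]
      exact mul_le_mul_of_nonneg_left (hR q hq) (abs_nonneg _)
    have hzM : ‖z‖ ≤ M := by
      rw [hz_eq, norm_smul, Real.norm_of_nonneg hs₀.le]
      exact mul_le_mul hs₂ ((norm_sub_le _ _).trans (add_le_add (hbound hp) (hbound hv.1)))
        (norm_nonneg _) zero_le_two
    exact mem_biUnion (x := (v, z)) ⟨hv, hz, hzM⟩ ⟨⟨p, hp, hpx⟩, hyx⟩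
  have hclosed : IsClosed (⋃ vz ∈ T, A vz) :=
    (hext.prod (finite_setOf_isLatticePt_norm_le M)).isClosed_biUnion fun vz _ => hA vz
  have hone := hclosed.mem_of_tendsto (by simpa using hlim.inv₀ one_ne_zero)
    (Eventually.of_forall hmem)
  obtain ⟨⟨v, z⟩, ⟨hv, hz, -⟩, hx, hyx⟩ := mem_iUnion₂.1 hone
  exact mem_cnUnion_iff.2 ⟨v, hv, z, hz, by simpa using hx, by simpa using hyx⟩

lemma exists_seq_ratCast_tendsto_one :
    ∃ s : ℕ → ℚ, (∀ n, (s n : ℝ) ∈ Ioc 1 2) ∧ Tendsto (fun n => (s n : ℝ)) atTop (𝓝 1) := by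
  refine ⟨fun n => 1 + 1 / (n + 1), fun n => ?_, ?_⟩
  · push_cast
    exact ⟨lt_add_of_pos_right _ Nat.one_div_pos_of_nat,
      by linarith [Nat.one_div_le_one_div (α := ℝ) (Nat.zero_le n)]⟩
  · push_cast
    simpa using (tendsto_one_div_add_atTop_nhds_zero_nat (𝕜 := ℝ)).const_add 1

theorem statement16_general (d : ℕ) (k : ℚ) (t : ℝ)
    (hyp : ∀ Q : Set (Pt d), IsRationalPolytope Q → polyDim Q = d →
      EdgeLengthsGT Q t → ConvexNormal k Q) :
    ∀ P : Set (Pt d), IsRationalPolytope P → polyDim P = d →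
      EdgeLengthsGE P t → ConvexNormal k P := by
  intro P hPrat hPdim hEdge c hc2 hck
  obtain ⟨s, hs, hs_lim⟩ := exists_seq_ratCast_tendsto_one
  have hCN (n : ℕ) : ConvexNormal k ((s n : ℝ) • P) :=
    hyp _ (hPrat.ratCast_smul _) (by rw [polyDim_smul (one_pos.trans (hs n).1).ne', hPdim])
      (hEdge.smul_of_one_lt (hs n).1)
  obtain ⟨V, -, rfl⟩ := hPrat
  refine Subset.antisymm ?_ (cnUnion_subset_smul (convex_convexHull ℝ _)
    (by exact_mod_cast one_le_two.trans hc2))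
  rintro _ ⟨y, hy, rfl⟩
  refine mem_cnUnion_of_tendsto (V.finite_toSet.isCompact_convexHull (𝕜 := ℝ))
    (V.finite_toSet.subset extremePoints_convexHull_subset)
    (fun n => ⟨one_pos.trans (hs n).1, (hs n).2⟩) hs_lim fun n => ?_
  rw [← hCN n c hc2 hck, smul_comm]
  exact smul_mem_smul_set (smul_mem_smul_set hy)

/-- Lemma 6.1. If every rational `d`-polytope with edges of lattice length
strictly greater than `t` is `k`-convex-normal, then so is every rational `d`-polytope with
edges of lattice length at least `t`. -/
theorem statement16 (d : ℕ) (hd : 0 < d) (k : ℚ) (hk : 2 ≤ k) (t : ℝ)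
    (hyp : ∀ Q : Set (Pt d), IsRationalPolytope Q → polyDim Q = d →
      EdgeLengthsGT Q t → ConvexNormal k Q) :
    ∀ P : Set (Pt d), IsRationalPolytope P → polyDim P = d →
      EdgeLengthsGE P t → ConvexNormal k P :=
  statement16_general d k t hyp
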